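/- arXiv:2501.00772 — 4 statements merged into one kernel-verified Lean document; each statement's English description precedes it below -/
import Mathlib

section
/- Let E ⊆ ℝ and θ ∈ (0,1). If E is θ-thick, i.e., there exists an integer M such that for every integer n ≥ M and every x ∈ Π_n(θ) one has E ∩ [x, x + e^{θn}) ≠ ∅, then the macroscopic (Barlow–Taylor) Hausdorff dimension of E satisfies Dim_H(E) ≥ 1 − θ. -/
open MeasureTheory Real

/-- The `n`th shell of a set `E ⊆ ℝ`: `E ∩ ((-e^(n+1), -e^n] ∪ [e^n, e^(n+1)))`. -/
def shell (n : ℕ) (E : Set ℝ) : Set ℝ :=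
  E ∩ (Set.Ioc (-Real.exp (n + 1)) (-Real.exp n) ∪ Set.Ico (Real.exp n) (Real.exp (n + 1)))

/-- The `ρ`-dimensional (macroscopic) Hausdorff content of the `n`th shell of `E`:
the infimum of `∑ (length Qᵢ / e^n)^ρ` over all finite covers of the `n`th shell of `E`
by intervals `Qᵢ = [aᵢ, bᵢ]` of length at least `1`. -/
noncomputable def nuShell (ρ : ℝ) (n : ℕ) (E : Set ℝ) : ENNReal :=
  ⨅ (m : ℕ) (a : Fin m → ℝ) (b : Fin m → ℝ) (_ : ∀ i, 1 ≤ b i - a i)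
    (_ : shell n E ⊆ ⋃ i, Set.Icc (a i) (b i)),
      ∑ i, ENNReal.ofReal (((b i - a i) / Real.exp n) ^ ρ)

/-- The Barlow–Taylor macroscopic Hausdorff dimension of `E ⊆ ℝ`:
`inf {ρ > 0 : ∑_{n=1}^∞ ν_ρ^n(E) < ∞}`. -/
noncomputable def macroDimH (E : Set ℝ) : ℝ :=
  sInf {ρ : ℝ | 0 < ρ ∧ ∑' n : ℕ, nuShell ρ (n + 1) E < ⊤}

lemma nuShell_le_cover (ρ : ℝ) (n : ℕ) (E : Set ℝ) (m : ℕ) (a b : Fin m → ℝ)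
    (h1 : ∀ i, 1 ≤ b i - a i) (h2 : shell n E ⊆ ⋃ i, Set.Icc (a i) (b i)) :
    nuShell ρ n E ≤ ∑ i, ENNReal.ofReal (((b i - a i) / Real.exp n) ^ ρ) :=
  iInf_le_of_le m <| iInf_le_of_le a <| iInf_le_of_le b <| iInf_le_of_le h1 <| iInf_le _ h2

lemma exists_unit_cover {c x : ℝ} {N : ℕ} (hN : 1 ≤ N) (hx : x ∈ Set.Icc c (c + N)) :
    ∃ k : ℕ, k < N ∧ x ∈ Set.Icc (c + k) (c + k + 1) := by
  have h0 : 0 ≤ x - c := by linarith [hx.1]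
  by_cases hcase : ⌊x - c⌋₊ < N
  · refine ⟨⌊x - c⌋₊, hcase, ?_, ?_⟩
    · have := Nat.floor_le h0; linarith
    · have := Nat.lt_floor_add_one (x - c); linarith
  · refine ⟨N - 1, Nat.sub_lt hN one_pos, ?_, ?_⟩ <;>
    · push_neg at hcase
      have hfl : (N : ℝ) ≤ x - c := le_trans (Nat.cast_le.2 hcase) (Nat.floor_le h0)
      have hx2 := hx.2
      have hNc : ((N - 1 : ℕ) : ℝ) = (N : ℝ) - 1 := by
        rw [Nat.cast_sub hN]; simp
      rw [hNc]; linarith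

/-- Upper bound: covering the `n`-th shell by unit intervals. -/
lemma nuShell_two_le (n : ℕ) (E : Set ℝ) :
    nuShell 2 n E ≤ ENNReal.ofReal (2 * Real.exp (1 - n)) := by
  have hen : (1 : ℝ) ≤ Real.exp n := Real.one_le_exp (by positivity)
  have he1 : (2.7182818283 : ℝ) < Real.exp 1 := Real.exp_one_gt_d9
  have hexp1 : Real.exp ((n : ℝ) + 1) = Real.exp n * Real.exp 1 := by
    rw [← Real.exp_add]
  have hL1 : (1 : ℝ) ≤ Real.exp ((n : ℝ) + 1) - Real.exp n := by nlinarith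
  set L : ℝ := Real.exp ((n : ℝ) + 1) - Real.exp n with hLdef
  set N : ℕ := ⌈L⌉₊ with hNdef
  have hN1 : 1 ≤ N := Nat.one_le_iff_ne_zero.2 (by
    intro h
    have := Nat.ceil_eq_zero.1 h
    linarith)
  have hLleN : L ≤ (N : ℝ) := Nat.le_ceil L
  have hNle : (N : ℝ) ≤ Real.exp ((n : ℝ) + 1) := by
    have := Nat.ceil_lt_add_one (by linarith : (0:ℝ) ≤ L)
    have : (N : ℝ) < L + 1 := this
    linarith
  -- the cover
  set a : Fin (2 * N) → ℝ := fun i =>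
    if (i : ℕ) < N then Real.exp n + ((i : ℕ) : ℝ)
    else -Real.exp ((n : ℝ) + 1) + (((i : ℕ) - N : ℕ) : ℝ) with ha
  set b : Fin (2 * N) → ℝ := fun i => a i + 1 with hb
  have h1 : ∀ i, 1 ≤ b i - a i := fun i => by simp [hb]
  have h2 : shell n E ⊆ ⋃ i, Set.Icc (a i) (b i) := by
    intro x hx
    rcases hx.2 with hneg | hpos
    · have hx1 : x ∈ Set.Icc (-Real.exp ((n : ℝ) + 1)) (-Real.exp ((n : ℝ) + 1) + N) := by
        constructor
        · linarith [hneg.1]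
        · have := hneg.2; linarith
      obtain ⟨k, hk, hk1, hk2⟩ := exists_unit_cover hN1 hx1
      refine Set.mem_iUnion.2 ⟨⟨N + k, by omega⟩, ?_⟩
      have : ¬ ((N + k : ℕ) < N) := by omega
      constructor <;> simp only [ha, hb, this, if_false] <;>
      · simp only [Nat.add_sub_cancel_left]
        linarith
    · have hx1 : x ∈ Set.Icc (Real.exp n) (Real.exp n + N) := by
        constructor
        · exact hpos.1
        · have := hpos.2; linarith
      obtain ⟨k, hk, hk1, hk2⟩ := exists_unit_cover hN1 hx1
      refine Set.mem_iUnion.2 ⟨⟨k, by omega⟩, ?_⟩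
      constructor <;> simp only [ha, hb, hk, if_true] <;> linarith
  refine le_trans (nuShell_le_cover 2 n E (2 * N) a b h1 h2) ?_
  have hval : ∀ i : Fin (2 * N), ((b i - a i) / Real.exp n) ^ (2 : ℝ)
      = (1 / Real.exp n) ^ (2 : ℕ) := by
    intro i
    have : b i - a i = 1 := by simp [hb]
    rw [this, show (2 : ℝ) = ((2 : ℕ) : ℝ) by norm_num, Real.rpow_natCast]
  calc ∑ i : Fin (2 * N), ENNReal.ofReal (((b i - a i) / Real.exp n) ^ (2:ℝ))
      = ∑ _i : Fin (2 * N), ENNReal.ofReal ((1 / Real.exp n) ^ (2 : ℕ)) := by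
        exact Finset.sum_congr rfl fun i _ => by rw [hval i]
    _ = (2 * N : ℕ) * ENNReal.ofReal ((1 / Real.exp n) ^ (2 : ℕ)) := by
        rw [Finset.sum_const, Finset.card_univ, Fintype.card_fin, nsmul_eq_mul]
    _ = ENNReal.ofReal (((2 * N : ℕ) : ℝ) * (1 / Real.exp n) ^ (2 : ℕ)) := by
        rw [← ENNReal.ofReal_natCast, ← ENNReal.ofReal_mul (Nat.cast_nonneg _)]
    _ ≤ ENNReal.ofReal (2 * Real.exp (1 - n)) := by
        apply ENNReal.ofReal_le_ofReal
        have hexp2 : Real.exp (1 - (n : ℝ)) * Real.exp n = Real.exp 1 := by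
          rw [← Real.exp_add]; ring_nf
        have hpos : (0 : ℝ) < Real.exp n := Real.exp_pos _
        push_cast
        rw [div_pow, one_pow]
        have h3 : Real.exp (1 - (n:ℝ)) * Real.exp (n:ℝ) ^ 2 = Real.exp 1 * Real.exp (n:ℝ) := by
          rw [pow_two, ← mul_assoc, hexp2]
        rw [mul_one_div, div_le_iff₀ (by positivity : (0:ℝ) < Real.exp (n:ℝ) ^ 2)]
        nlinarith [hNle, hexp1, hpos, h3]

lemma tsum_nuShell_two_lt_top (E : Set ℝ) : ∑' n : ℕ, nuShell 2 (n + 1) E < ⊤ := by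
  have hb : ∀ n : ℕ, nuShell 2 (n + 1) E
      ≤ ENNReal.ofReal 2 * (ENNReal.ofReal (Real.exp (-1))) ^ n := by
    intro n
    refine le_trans (nuShell_two_le (n + 1) E) ?_
    have h1 : Real.exp (1 - ((n + 1 : ℕ) : ℝ)) = Real.exp (-1) ^ n := by
      push_cast
      rw [show (1 : ℝ) - ((n : ℝ) + 1) = (n : ℝ) * (-1) by ring, Real.exp_nat_mul]
    rw [h1, ← ENNReal.ofReal_pow (Real.exp_pos _).le,
      ← ENNReal.ofReal_mul (by norm_num)]
  calc ∑' n : ℕ, nuShell 2 (n + 1) E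
      ≤ ∑' n : ℕ, ENNReal.ofReal 2 * (ENNReal.ofReal (Real.exp (-1))) ^ n :=
        ENNReal.tsum_le_tsum hb
    _ = ENNReal.ofReal 2 * (1 - ENNReal.ofReal (Real.exp (-1)))⁻¹ := by
        rw [ENNReal.tsum_mul_left, ENNReal.tsum_geometric]
    _ < ⊤ := by
        apply ENNReal.mul_lt_top ENNReal.ofReal_lt_top
        rw [lt_top_iff_ne_top, Ne, ENNReal.inv_eq_top]
        have : ENNReal.ofReal (Real.exp (-1)) < 1 := by
          rw [← ENNReal.ofReal_one]
          exact ENNReal.ofReal_lt_ofReal_iff_of_nonneg (Real.exp_pos _).le |>.2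
            (Real.exp_lt_one_iff.2 (by norm_num))
        exact (tsub_pos_of_lt this).ne'


set_option maxHeartbeats 1000000 in
/-- Key lower bound: if `E` is `θ`-thick and `0 < ρ ≤ 1 - θ`, then for `n ≥ M`
the content of the `n`-th shell is bounded below by `(e-2)/3`. -/
lemma key_lower (E : Set ℝ) (θ : ℝ) (hθ : θ ∈ Set.Ioo (0 : ℝ) 1) (M : ℕ)
    (hthick : ∀ n : ℕ, M ≤ n → ∀ i : ℤ, 0 ≤ i →
      (i : ℝ) ≤ Real.exp (n * (1 - θ) + 1) - Real.exp (n * (1 - θ)) →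
      (E ∩ Set.Ico (Real.exp n + i * Real.exp (θ * n))
        (Real.exp n + i * Real.exp (θ * n) + Real.exp (θ * n))).Nonempty)
    (ρ : ℝ) (hρ1 : 0 < ρ) (hρ2 : ρ ≤ 1 - θ) (n : ℕ) (hn : M ≤ n) :
    ENNReal.ofReal ((Real.exp 1 - 2) / 3) ≤ nuShell ρ n E := by
  obtain ⟨hθ0, hθ1⟩ := hθ
  have he1 : (2.7182818283 : ℝ) < Real.exp 1 := Real.exp_one_gt_d9
  set h : ℝ := Real.exp (θ * n) with hhdef
  set A : ℝ := Real.exp ((n : ℝ) * (1 - θ)) with hAdef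
  have hA : h * A = Real.exp n := by
    rw [hhdef, hAdef, ← Real.exp_add]
    congr 1; ring
  have hh1 : (1 : ℝ) ≤ h := Real.one_le_exp (mul_nonneg hθ0.le (Nat.cast_nonneg n))
  have hA1 : (1 : ℝ) ≤ A :=
    Real.one_le_exp (mul_nonneg (Nat.cast_nonneg n) (by linarith))
  have hh0 : (0 : ℝ) < h := by linarith
  have hA0 : (0 : ℝ) < A := by linarith
  have hen1 : (1 : ℝ) ≤ Real.exp n := Real.one_le_exp (by positivity)
  set K : ℕ := ⌊(Real.exp 1 - 1) * A⌋₊ with hKdef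
  have htnonneg : (0 : ℝ) ≤ (Real.exp 1 - 1) * A := by nlinarith
  have hKle : (K : ℝ) ≤ (Real.exp 1 - 1) * A := Nat.floor_le htnonneg
  have hKgt : (Real.exp 1 - 1) * A - 1 < (K : ℝ) := by
    have := Nat.lt_floor_add_one ((Real.exp 1 - 1) * A)
    linarith
  have hK1 : 1 ≤ K := by
    rw [Nat.le_floor_iff htnonneg]
    push_cast; nlinarith
  -- witnesses in each cell of the grid
  have hw : ∀ i : ℕ, i < K → ∃ y, y ∈ E ∧
      (Real.exp n + (i : ℝ) * h ≤ y ∧ y < Real.exp n + (i : ℝ) * h + h) := by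
    intro i hi
    have hib : ((i : ℤ) : ℝ) ≤ Real.exp ((n : ℝ) * (1 - θ) + 1) - Real.exp ((n : ℝ) * (1 - θ)) := by
      have h1 : Real.exp ((n : ℝ) * (1 - θ) + 1) = A * Real.exp 1 := by
        rw [hAdef, ← Real.exp_add]
      have h2 : ((i : ℤ) : ℝ) < (K : ℝ) := by push_cast; exact_mod_cast Nat.cast_lt.2 hi
      rw [h1, ← hAdef]
      nlinarith
    obtain ⟨y, hyE, hy1, hy2⟩ := hthick n hn (i : ℤ) (Int.natCast_nonneg i) hib
    exact ⟨y, hyE, by push_cast at hy1 ⊢; linarith, by push_cast at hy2 ⊢; linarith⟩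
  choose Y hYE hYlo hYhi using hw
  have hYshell : ∀ i (hi : i < K), Y i hi ∈ shell n E := by
    intro i hi
    refine ⟨hYE i hi, Or.inr ⟨?_, ?_⟩⟩
    · have := hYlo i hi
      have : (0 : ℝ) ≤ (i : ℝ) * h := by positivity
      linarith [hYlo i hi]
    · have hiK : ((i : ℝ) + 1) ≤ (K : ℝ) := by exact_mod_cast Nat.succ_le_of_lt hi
      have hexp1 : Real.exp ((n : ℝ) + 1) = Real.exp n * Real.exp 1 := by
        rw [← Real.exp_add]
      have hKh : (K : ℝ) * h ≤ (Real.exp 1 - 1) * A * h := by nlinarith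
      have : (i : ℝ) * h + h ≤ (K : ℝ) * h := by nlinarith
      have hAh : (Real.exp 1 - 1) * A * h = Real.exp ((n : ℝ) + 1) - Real.exp n := by
        rw [hexp1]; nlinarith [hA]
      linarith [hYhi i hi]
  refine le_iInf fun m => le_iInf fun a => le_iInf fun b => le_iInf fun h1 => le_iInf fun h2 => ?_
  have hcov : ∀ i (hi : i < K), ∃ j : Fin m, Y i hi ∈ Set.Icc (a j) (b j) := by
    intro i hi
    exact Set.mem_iUnion.1 (h2 (hYshell i hi))
  rcases Nat.eq_zero_or_pos m with hm | hm
  · exfalso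
    obtain ⟨j, _⟩ := hcov 0 hK1
    exact absurd j.2 (by omega)
  choose F hF using hcov
  classical
  set f : ℕ → Fin m := fun i => if hi : i < K then F i hi else ⟨0, hm⟩ with hfdef
  have hcard : K = ∑ j : Fin m, ((Finset.range K).filter (fun i => f i = j)).card := by
    conv_lhs => rw [← Finset.card_range K]
    exact Finset.card_eq_sum_card_fiberwise (fun x _ => Finset.mem_univ _)
  -- bound on each fiber
  have hfiber : ∀ j : Fin m,
      ((((Finset.range K).filter (fun i => f i = j)).card : ℝ))
        ≤ 3 * A * ((b j - a j) / Real.exp n) ^ ρ := by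
    intro j
    set s := (Finset.range K).filter (fun i => f i = j) with hs
    set ℓ : ℝ := b j - a j with hldef
    have hℓ1 : (1 : ℝ) ≤ ℓ := h1 j
    have hℓ0 : (0 : ℝ) < ℓ := by linarith
    have hmem : ∀ i ∈ s, ∃ hi : i < K, Y i hi ∈ Set.Icc (a j) (b j) := by
      intro i his
      rw [hs, Finset.mem_filter, Finset.mem_range] at his
      obtain ⟨hiK, hfij⟩ := his
      refine ⟨hiK, ?_⟩
      have hfi : f i = F i hiK := dif_pos hiK
      rw [hfi] at hfij
      have := hF i hiK
      rwa [hfij] at this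
    have hbound2 : s.card ≤ K :=
      le_trans (Finset.card_filter_le _ _) (by rw [Finset.card_range])
    have hbound1 : (s.card : ℝ) ≤ ℓ / h + 2 := by
      rcases s.eq_empty_or_nonempty with hse | hse
      · rw [hse]; simp; positivity
      · set i0 := s.min' hse with hi0def
        have hi0s : i0 ∈ s := s.min'_mem hse
        obtain ⟨hi0K, hY0⟩ := hmem i0 hi0s
        have hkey : ∀ i ∈ s, (i : ℝ) < (i0 : ℝ) + (ℓ / h + 1) := by
          intro i his
          obtain ⟨hiK, hYi⟩ := hmem i his
          have h1i : Real.exp n + (i : ℝ) * h ≤ b j := le_trans (hYlo i hiK) hYi.2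
          have h2i : a j < Real.exp n + (i0 : ℝ) * h + h := lt_of_le_of_lt hY0.1 (hYhi i0 hi0K)
          rw [show (i0 : ℝ) + (ℓ / h + 1) = ((i0 : ℝ) * h + ℓ + h) / h by field_simp; ring,
            lt_div_iff₀ hh0]
          linarith
        set D : ℕ := ⌊ℓ / h + 1⌋₊ with hDdef
        have hsub : s ⊆ Finset.Icc i0 (i0 + D) := by
          intro i his
          rw [Finset.mem_Icc]
          refine ⟨s.min'_le i his, ?_⟩
          have hge : i0 ≤ i := s.min'_le i his
          have hik := hkey i his
          have hc : ((i - i0 : ℕ) : ℝ) ≤ ℓ / h + 1 := by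
            rw [Nat.cast_sub hge]; push_cast; linarith
          have : i - i0 ≤ D := Nat.le_floor hc
          omega
        have hcard' : s.card ≤ D + 1 := by
          have h' := Finset.card_le_card hsub
          rw [Nat.card_Icc] at h'
          omega
        have hD : (D : ℝ) ≤ ℓ / h + 1 := Nat.floor_le (by positivity)
        have : (s.card : ℝ) ≤ (D : ℝ) + 1 := by exact_mod_cast hcard'
        linarith
    have hbase0 : (0 : ℝ) < ℓ / Real.exp n := by positivity
    have hρ1' : ρ ≤ 1 := by linarith
    rcases le_total ℓ h with hc | hc
    · have c1 : (s.card : ℝ) ≤ 3 := by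
        have : ℓ / h ≤ 1 := (div_le_one hh0).2 hc
        linarith
      have e1 : ((1 : ℝ) / Real.exp n) ^ (1 - θ) = 1 / A := by
        rw [one_div, ← Real.exp_neg, ← Real.exp_mul, hAdef, one_div, ← Real.exp_neg]
        congr 1; ring
      have c2 : (1 : ℝ) / A ≤ (ℓ / Real.exp n) ^ ρ := by
        rw [← e1]
        calc ((1 : ℝ) / Real.exp n) ^ (1 - θ) ≤ ((1 : ℝ) / Real.exp n) ^ ρ :=
              Real.rpow_le_rpow_of_exponent_ge (by positivity)
                (by rw [div_le_one (by positivity)]; exact hen1) hρ2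
          _ ≤ (ℓ / Real.exp n) ^ ρ :=
              Real.rpow_le_rpow (by positivity) (by gcongr) hρ1.le
      have hm2 : 3 * A * (1 / A) ≤ 3 * A * ((ℓ / Real.exp n) ^ ρ) :=
        mul_le_mul_of_nonneg_left c2 (by positivity)
      have h3 : 3 * A * (1 / A) = 3 := by field_simp
      linarith
    · rcases le_total ℓ (Real.exp n) with hc2 | hc2
      · have c1 : (s.card : ℝ) ≤ 3 * (ℓ / h) := by
          have : (1 : ℝ) ≤ ℓ / h := (one_le_div hh0).2 hc
          linarith
        have c2 : ℓ / Real.exp n ≤ (ℓ / Real.exp n) ^ ρ := by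
          have hb1 : ℓ / Real.exp n ≤ 1 := (div_le_one (by positivity)).2 hc2
          have := Real.rpow_le_rpow_of_exponent_ge hbase0 hb1 hρ1'
          rwa [Real.rpow_one] at this
        have heq : 3 * (ℓ / h) = 3 * A * (ℓ / Real.exp n) := by
          rw [← hA]; field_simp
        have hm2 : 3 * A * (ℓ / Real.exp n) ≤ 3 * A * (ℓ / Real.exp n) ^ ρ :=
          mul_le_mul_of_nonneg_left c2 (by positivity)
        linarith
      · have c1 : (s.card : ℝ) ≤ (Real.exp 1 - 1) * A := by
          refine le_trans ?_ hKle
          exact_mod_cast hbound2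
        have c2 : (1 : ℝ) ≤ (ℓ / Real.exp n) ^ ρ :=
          Real.one_le_rpow ((one_le_div (by positivity)).2 hc2) hρ1.le
        have hm2 : 3 * A * 1 ≤ 3 * A * ((ℓ / Real.exp n) ^ ρ) :=
          mul_le_mul_of_nonneg_left c2 (by positivity)
        nlinarith [hA0, hm2, c1,
          mul_nonneg (by linarith [Real.exp_one_lt_d9] : (0:ℝ) ≤ 4 - Real.exp 1) hA0.le]
  have hsum0 : (0 : ℝ) ≤ ∑ j : Fin m, ((b j - a j) / Real.exp n) ^ ρ :=
    Finset.sum_nonneg fun j _ =>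
      Real.rpow_nonneg (div_nonneg (by linarith [h1 j]) (Real.exp_pos _).le) _
  have hsum : (K : ℝ) ≤ 3 * A * ∑ j : Fin m, ((b j - a j) / Real.exp n) ^ ρ := by
    calc (K : ℝ)
        = ∑ j : Fin m, ((((Finset.range K).filter (fun i => f i = j)).card : ℝ)) := by
          rw [← Nat.cast_sum]
          exact_mod_cast congrArg (Nat.cast : ℕ → ℝ) hcard
      _ ≤ ∑ j : Fin m, 3 * A * ((b j - a j) / Real.exp n) ^ ρ :=
          Finset.sum_le_sum fun j _ => hfiber j
      _ = 3 * A * ∑ j : Fin m, ((b j - a j) / Real.exp n) ^ ρ := by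
          rw [← Finset.mul_sum]
  have hfin : (Real.exp 1 - 2) / 3 ≤ ∑ j : Fin m, ((b j - a j) / Real.exp n) ^ ρ := by
    nlinarith [hsum, hKgt, hA1, hsum0, hA0]
  calc ENNReal.ofReal ((Real.exp 1 - 2) / 3)
      ≤ ENNReal.ofReal (∑ j : Fin m, ((b j - a j) / Real.exp n) ^ ρ) :=
        ENNReal.ofReal_le_ofReal hfin
    _ = ∑ j : Fin m, ENNReal.ofReal (((b j - a j) / Real.exp n) ^ ρ) :=
        ENNReal.ofReal_sum_of_nonneg fun j _ =>
          Real.rpow_nonneg (div_nonneg (by linarith [h1 j]) (Real.exp_pos _).le) _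

/-- If `E ⊆ ℝ` is `θ`-thick for some `θ ∈ (0,1)` — that is, there is an integer `M`
such that for every `n ≥ M` and every point `x = e^n + i e^(θn)` of `Π_n(θ)` (where `i ∈ ℤ`,
`0 ≤ i ≤ e^(n(1-θ)+1) - e^(n(1-θ))`) one has `E ∩ [x, x + e^(θn)) ≠ ∅` — then
`Dim_H(E) ≥ 1 - θ`. -/
theorem thick_implies_macroDimH_lower_bound (E : Set ℝ) (θ : ℝ) (hθ : θ ∈ Set.Ioo (0 : ℝ) 1)
    (hthick : ∃ M : ℕ, ∀ n : ℕ, M ≤ n → ∀ i : ℤ, 0 ≤ i →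
      (i : ℝ) ≤ Real.exp (n * (1 - θ) + 1) - Real.exp (n * (1 - θ)) →
      (E ∩ Set.Ico (Real.exp n + i * Real.exp (θ * n))
        (Real.exp n + i * Real.exp (θ * n) + Real.exp (θ * n))).Nonempty) :
    1 - θ ≤ macroDimH E := by
  obtain ⟨M, hthick⟩ := hthick
  have hS2 : (2 : ℝ) ∈ {ρ : ℝ | 0 < ρ ∧ ∑' n : ℕ, nuShell ρ (n + 1) E < ⊤} :=
    ⟨two_pos, tsum_nuShell_two_lt_top E⟩
  rw [macroDimH]
  refine le_csInf ⟨2, hS2⟩ ?_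
  rintro ρ ⟨hρpos, hρsum⟩
  by_contra hlt
  push_neg at hlt
  have hkey : ∀ n : ℕ, M ≤ n → ENNReal.ofReal ((Real.exp 1 - 2) / 3) ≤ nuShell ρ n E :=
    fun n hn => key_lower E θ hθ M hthick ρ hρpos hlt.le n hn
  have hc0 : ENNReal.ofReal ((Real.exp 1 - 2) / 3) ≠ 0 := by
    rw [Ne, ENNReal.ofReal_eq_zero, not_le]
    linarith [Real.exp_one_gt_d9]
  have htop : (⊤ : ENNReal) ≤ ∑' n : ℕ, nuShell ρ (n + 1) E :=
    calc (⊤ : ENNReal) = ∑' _ : ℕ, ENNReal.ofReal ((Real.exp 1 - 2) / 3) :=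
          (ENNReal.tsum_const_eq_top_of_ne_zero hc0).symm
      _ ≤ ∑' n : ℕ, nuShell ρ ((n + M) + 1) E :=
          ENNReal.tsum_le_tsum fun n => hkey (n + M + 1) (by omega)
      _ ≤ ∑' n : ℕ, nuShell ρ (n + 1) E :=
          ENNReal.tsum_comp_le_tsum_of_injective (add_left_injective M)
            (fun k => nuShell ρ (k + 1) E)
  exact absurd hρsum (by simp [top_le_iff.1 htop])
end

section
/- Let X = (X_1, …, X_m) be an associated random vector and let x_1, …, x_m be real numbers. Then P(X_j ≤ x_j for all 1 ≤ j ≤ m) − ∏_{j=1}^m P(X_j ≤ x_j) ≤ Σ_{1 ≤ j < k ≤ m} ( P(X_j ≤ x_j, X_k ≤ x_k) − P(X_j ≤ x_j) P(X_k ≤ x_k) ). -/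
/-!
For an associated vector, events that are preimages of measurable lower sets form a lattice
of positively correlated events; write `Cov(A, B) = P(A ∩ B) - P(A) P(B)`. By
inclusion–exclusion, `Cov(A ∩ B, K) = Cov(A, K) + Cov(B, K) - Cov(A ∪ B, K)`, and the last term
is nonnegative, so `Cov(⋂ⱼ Aⱼ, K) ≤ ∑ⱼ Cov(Aⱼ, K)`. Adding the events `Aⱼ = {Xⱼ ≤ xⱼ}` one at
a time in increasing order of `j`, the defect `P(⋂ Aⱼ) - ∏ P(Aⱼ)` (which is nonnegative) grows
by at most `Cov(⋂_{j<k} Aⱼ, Aₖ) ≤ ∑_{j<k} Cov(Aⱼ, Aₖ)`.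
-/

open MeasureTheory

/-- A random vector `X = (X_1, …, X_m)` is associated if `Cov[h₁(X), h₂(X)] ≥ 0` for every
pair of functions `h₁, h₂ : ℝ^m → ℝ` that are nondecreasing in every coordinate and such that
`h₁(X), h₂(X) ∈ L²`. -/
def IsAssociated {Ω : Type*} [MeasurableSpace Ω] (μ : Measure Ω) {m : ℕ}
    (X : Fin m → Ω → ℝ) : Prop :=
  ∀ h₁ h₂ : (Fin m → ℝ) → ℝ,
    (∀ x y : Fin m → ℝ, (∀ i, x i ≤ y i) → h₁ x ≤ h₁ y) →
    (∀ x y : Fin m → ℝ, (∀ i, x i ≤ y i) → h₂ x ≤ h₂ y) →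
    MemLp (fun ω => h₁ fun i => X i ω) 2 μ →
    MemLp (fun ω => h₂ fun i => X i ω) 2 μ →
    0 ≤ ∫ ω, ((h₁ fun i => X i ω) - ∫ ω', (h₁ fun i => X i ω') ∂μ) *
        ((h₂ fun i => X i ω) - ∫ ω', (h₂ fun i => X i ω') ∂μ) ∂μ

open ProbabilityTheory Finset Set

section EventCovariance

variable {Ω : Type*} [MeasurableSpace Ω] {μ : Measure Ω}

def eventCov (μ : Measure Ω) (A B : Set Ω) : ℝ :=
  μ.real (A ∩ B) - μ.real A * μ.real B

theorem covariance_indicator_one [IsProbabilityMeasure μ] {A B : Set Ω}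
    (hA : MeasurableSet A) (hB : MeasurableSet B) :
    cov[A.indicator 1, B.indicator 1; μ] = eventCov μ A B := by
  have hA2 : MemLp (A.indicator (1 : Ω → ℝ)) 2 μ := memLp_indicator_const 2 hA 1 (by simp)
  have hB2 : MemLp (B.indicator (1 : Ω → ℝ)) 2 μ := memLp_indicator_const 2 hB 1 (by simp)
  rw [covariance_eq_sub hA2 hB2, ← inter_indicator_one,
    integral_indicator_one (hA.inter hB), integral_indicator_one hA, integral_indicator_one hB,
    eventCov]

@[simp]
theorem eventCov_univ_left [IsProbabilityMeasure μ] (K : Set Ω) : eventCov μ univ K = 0 := by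
  simp [eventCov]

theorem eventCov_inter_add_eventCov_union [IsFiniteMeasure μ] (A : Set Ω) {B : Set Ω}
    (K : Set Ω) (hB : MeasurableSet B) (hBK : MeasurableSet (B ∩ K)) :
    eventCov μ (A ∩ B) K + eventCov μ (A ∪ B) K = eventCov μ A K + eventCov μ B K := by
  have hAB := measureReal_union_add_inter (μ := μ) (s := A) hB
  have hABK := measureReal_union_add_inter (μ := μ) (s := A ∩ K) hBK
  rw [← union_inter_distrib_right, ← inter_inter_distrib_right] at hABK
  simp only [eventCov]
  linear_combination hABK - μ.real K * hAB

end EventCovariance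

theorem Finset.sum_sum_lt_insert_of_forall_lt {ι M : Type*} [LinearOrder ι] [AddCommMonoid M]
    (f : ι → ι → M) {s : Finset ι} {a : ι} (ha : ∀ j ∈ s, j < a) :
    ∑ j ∈ insert a s, ∑ k ∈ insert a s with j < k, f j k =
      ∑ j ∈ s, ∑ k ∈ s with j < k, f j k + ∑ j ∈ s, f j a := by
  have has : a ∉ s := fun h => lt_irrefl a (ha a h)
  have hmax : ∀ k ∈ insert a s, ¬ a < k := by
    simp only [mem_insert, forall_eq_or_imp, lt_irrefl, not_false_eq_true, true_and]
    exact fun k hk => (ha k hk).not_gt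
  rw [sum_insert has, filter_false_of_mem hmax, sum_empty, zero_add, ← sum_add_distrib]
  refine sum_congr rfl fun j hj => ?_
  rw [filter_insert, if_pos (ha j hj), sum_insert (by simp [has]), add_comm]

theorem Sublattice.biInter_mem {Ω ι : Type*} {L : Sublattice (Set Ω)} {E : ι → Set Ω}
    (huniv : univ ∈ L) (s : Finset ι) (hE : ∀ j ∈ s, E j ∈ L) :
    ⋂ j ∈ s, E j ∈ L := by
  classical
  induction s using Finset.induction_on with
  | empty => simpa using huniv
  | insert a s _ ih =>
    rw [set_biInter_insert]
    exact L.infClosed (hE a (mem_insert_self a s)) (ih fun j hj => hE j (mem_insert_of_mem hj))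

section CorrelatedSublattice

variable {Ω ι : Type*} [MeasurableSpace Ω] {μ : Measure Ω} [IsProbabilityMeasure μ]
  {L : Sublattice (Set Ω)} {E : ι → Set Ω}

theorem eventCov_biInter_le_sum (huniv : univ ∈ L) (hmeas : ∀ A ∈ L, MeasurableSet A)
    (hcorr : ∀ A ∈ L, ∀ B ∈ L, 0 ≤ eventCov μ A B) {K : Set Ω} (hK : K ∈ L) (s : Finset ι)
    (hE : ∀ j ∈ s, E j ∈ L) :
    eventCov μ (⋂ j ∈ s, E j) K ≤ ∑ j ∈ s, eventCov μ (E j) K := by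
  classical
  induction s using Finset.induction_on with
  | empty => simp
  | insert a s has ih =>
    have hEs := fun j hj => hE j (mem_insert_of_mem hj)
    have hIs := L.biInter_mem huniv s hEs
    have hunion : 0 ≤ eventCov μ (E a ∪ ⋂ j ∈ s, E j) K :=
      hcorr _ (L.supClosed (hE a (mem_insert_self a s)) hIs) K hK
    have hsplit := eventCov_inter_add_eventCov_union (μ := μ) (E a) K (hmeas _ hIs)
      (hmeas _ (L.infClosed hIs hK))
    rw [set_biInter_insert, sum_insert has]
    linarith [ih hEs]

theorem prod_measureReal_le_measureReal_biInter (huniv : univ ∈ L)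
    (hcorr : ∀ A ∈ L, ∀ B ∈ L, 0 ≤ eventCov μ A B) (s : Finset ι) (hE : ∀ j ∈ s, E j ∈ L) :
    ∏ j ∈ s, μ.real (E j) ≤ μ.real (⋂ j ∈ s, E j) := by
  classical
  induction s using Finset.induction_on with
  | empty => simp
  | insert a s has ih =>
    have hEs := fun j hj => hE j (mem_insert_of_mem hj)
    have hEa := hE a (mem_insert_self a s)
    rw [set_biInter_insert, prod_insert has]
    calc μ.real (E a) * ∏ j ∈ s, μ.real (E j) ≤ μ.real (E a) * μ.real (⋂ j ∈ s, E j) :=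
          mul_le_mul_of_nonneg_left (ih hEs) measureReal_nonneg
      _ ≤ μ.real (E a ∩ ⋂ j ∈ s, E j) :=
          sub_nonneg.1 (hcorr _ hEa _ (L.biInter_mem huniv s hEs))

theorem measureReal_biInter_sub_prod_le_sum_eventCov [LinearOrder ι] (huniv : univ ∈ L)
    (hmeas : ∀ A ∈ L, MeasurableSet A) (hcorr : ∀ A ∈ L, ∀ B ∈ L, 0 ≤ eventCov μ A B)
    (s : Finset ι) (hE : ∀ j ∈ s, E j ∈ L) :
    μ.real (⋂ j ∈ s, E j) - ∏ j ∈ s, μ.real (E j) ≤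
      ∑ j ∈ s, ∑ k ∈ s with j < k, eventCov μ (E j) (E k) := by
  induction s using Finset.induction_on_max with
  | empty => simp
  | insert a s ha ih =>
    have hEs := fun j hj => hE j (mem_insert_of_mem hj)
    have hEa := hE a (mem_insert_self a s)
    have hcov := eventCov_biInter_le_sum huniv hmeas hcorr hEa s hEs
    have hprod := prod_measureReal_le_measureReal_biInter huniv hcorr s hEs
    have hshrink : μ.real (E a) * (μ.real (⋂ j ∈ s, E j) - ∏ j ∈ s, μ.real (E j)) ≤
        μ.real (⋂ j ∈ s, E j) - ∏ j ∈ s, μ.real (E j) :=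
      mul_le_of_le_one_left (sub_nonneg.2 hprod) measureReal_le_one
    rw [set_biInter_insert, prod_insert fun h => (ha a h).false,
      sum_sum_lt_insert_of_forall_lt _ ha]
    have ih := ih hEs
    simp only [eventCov, inter_comm (E a)] at hcov ih ⊢
    linarith

end CorrelatedSublattice

-- Lower sets of `ℝ^m` need not be Borel, so measurability is imposed on the event itself.
def lowerEvents {Ω α : Type*} [MeasurableSpace Ω] [Preorder α] (Y : Ω → α) :
    Sublattice (Set Ω) where
  carrier := {A | MeasurableSet A ∧ ∃ D : Set α, IsLowerSet D ∧ Y ⁻¹' D = A}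
  supClosed' := by
    rintro _ ⟨hA, D, hD, rfl⟩ _ ⟨hB, D', hD', rfl⟩
    exact ⟨hA.union hB, D ∪ D', hD.union hD', rfl⟩
  infClosed' := by
    rintro _ ⟨hA, D, hD, rfl⟩ _ ⟨hB, D', hD', rfl⟩
    exact ⟨hA.inter hB, D ∩ D', hD.inter hD', rfl⟩

theorem univ_mem_lowerEvents {Ω α : Type*} [MeasurableSpace Ω] [Preorder α] (Y : Ω → α) :
    univ ∈ lowerEvents Y :=
  ⟨MeasurableSet.univ, univ, isLowerSet_univ, rfl⟩

theorem IsLowerSet.antitone_indicator_one {α : Type*} [Preorder α] {D : Set α}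
    (hD : IsLowerSet D) : Antitone (D.indicator (1 : α → ℝ)) := by
  intro y z hyz
  by_cases hz : z ∈ D
  · simp [hz, hD hyz hz]
  · simp [hz, indicator_nonneg]

theorem IsAssociated.eventCov_nonneg {Ω : Type*} [MeasurableSpace Ω] {μ : Measure Ω}
    [IsProbabilityMeasure μ] {m : ℕ} {X : Fin m → Ω → ℝ} (hX : IsAssociated μ X) :
    ∀ A ∈ lowerEvents (fun ω i => X i ω), ∀ B ∈ lowerEvents (fun ω i => X i ω),
      0 ≤ eventCov μ A B := by
  rintro _ ⟨hA, D, hD, rfl⟩ _ ⟨hB, E, hE, rfl⟩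
  have hcov : 0 ≤ cov[-(_ ⁻¹' D).indicator 1, -(_ ⁻¹' E).indicator 1; μ] :=
    hX _ _ (fun y z hyz => neg_le_neg (hD.antitone_indicator_one hyz))
      (fun y z hyz => neg_le_neg (hE.antitone_indicator_one hyz))
      (memLp_indicator_const 2 hA 1 (by simp)).neg (memLp_indicator_const 2 hB 1 (by simp)).neg
  rwa [covariance_neg_left, covariance_neg_right, neg_neg, covariance_indicator_one hA hB]
    at hcov

/-- For an associated random vector `X = (X_1, …, X_m)` and reals `x_1, …, x_m`,
`P(∀ j, X_j ≤ x_j) - ∏_j P(X_j ≤ x_j)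
  ≤ ∑_{j < k} (P(X_j ≤ x_j, X_k ≤ x_k) - P(X_j ≤ x_j) P(X_k ≤ x_k))`. -/
theorem associated_joint_cdf_bound
    {Ω : Type*} [MeasurableSpace Ω] (μ : Measure Ω) [IsProbabilityMeasure μ]
    {m : ℕ} (X : Fin m → Ω → ℝ) (hXmeas : ∀ i, Measurable (X i))
    (hX : IsAssociated μ X) (x : Fin m → ℝ) :
    (μ {ω | ∀ j, X j ω ≤ x j}).toReal - ∏ j, (μ {ω | X j ω ≤ x j}).toReal ≤
      ∑ j : Fin m, ∑ k ∈ Finset.univ.filter (fun k => j < k),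
        ((μ {ω | X j ω ≤ x j ∧ X k ω ≤ x k}).toReal -
          (μ {ω | X j ω ≤ x j}).toReal * (μ {ω | X k ω ≤ x k}).toReal) := by
  have hlower : ∀ j ∈ Finset.univ, {ω | X j ω ≤ x j} ∈ lowerEvents (fun ω i => X i ω) :=
    fun j _ => ⟨measurableSet_le (hXmeas j) measurable_const, {y | y j ≤ x j},
      fun _ _ hyz hz => (hyz j).trans hz, rfl⟩
  have hbound := measureReal_biInter_sub_prod_le_sum_eventCov (univ_mem_lowerEvents _)
    (fun _ hA => hA.1) hX.eventCov_nonneg Finset.univ hlower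
  have hjoint : ⋂ j ∈ Finset.univ, {ω | X j ω ≤ x j} = {ω | ∀ j, X j ω ≤ x j} := by
    ext; simp
  rwa [hjoint] at hbound
end

section
/- Let E be a random subset of ℝ on a probability space (such that all the events below are measurable) and fix θ ∈ (0,1). If Σ_{n=1}^∞ Σ_{x ∈ Π_n(θ)} P( E ∩ [x, x + e^{θn}) = ∅ ) < ∞, then almost surely the macroscopic Hausdorff dimension satisfies Dim_H(E) ≥ 1 − θ. -/
open MeasureTheory Real

lemma nuShell_le_unit (ρ : ℝ) (n : ℕ) (E : Set ℝ) :
    nuShell ρ n E ≤ (⌈2 * Real.exp (n + 1)⌉₊ : ENNReal) *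
      ENNReal.ofReal ((1 / Real.exp n) ^ ρ) := by
  set K := ⌈2 * Real.exp (n + 1)⌉₊ with hK
  set a : Fin K → ℝ := fun i => -Real.exp (n + 1) + i with ha
  set b : Fin K → ℝ := fun i => a i + 1 with hb
  have hlen : ∀ i, 1 ≤ b i - a i := by intro i; simp [hb]
  have hcov : shell n E ⊆ ⋃ i, Set.Icc (a i) (b i) := by
    intro y hy
    have hy' : -Real.exp (n + 1) < y ∧ y < Real.exp (n + 1) := by
      rcases hy.2 with h | h
      · refine ⟨h.1, lt_of_le_of_lt h.2 ?_⟩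
        have := Real.exp_pos ((n : ℝ) + 1)
        have := Real.exp_pos (n : ℝ)
        linarith [Real.exp_pos (n : ℝ), Real.exp_pos ((n : ℝ) + 1)]
      · refine ⟨lt_of_lt_of_le ?_ h.1, h.2⟩
        linarith [Real.exp_pos (n : ℝ), Real.exp_pos ((n : ℝ) + 1)]
    set t := y + Real.exp (n + 1) with ht
    have ht0 : 0 ≤ t := by simp [ht]; linarith [hy'.1]
    have htK : t < K := by
      have h1 : t < 2 * Real.exp (n + 1) := by simp [ht]; linarith [hy'.2]
      exact h1.trans_le (Nat.le_ceil _)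
    have hfl : ⌊t⌋₊ < K := by
      exact Nat.floor_lt ht0 |>.mpr htK
    refine Set.mem_iUnion.mpr ⟨⟨⌊t⌋₊, hfl⟩, ?_⟩
    constructor
    · simp only [ha]
      have := Nat.floor_le ht0
      simp [ht] at this ⊢
      linarith
    · simp only [hb, ha]
      have := Nat.lt_floor_add_one t
      simp [ht] at this ⊢
      linarith
  calc nuShell ρ n E ≤ ∑ i, ENNReal.ofReal (((b i - a i) / Real.exp n) ^ ρ) := by
        exact iInf_le_of_le K (iInf_le_of_le a (iInf_le_of_le b
          (iInf_le_of_le hlen (iInf_le _ hcov))))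
    _ = (K : ENNReal) * ENNReal.ofReal ((1 / Real.exp n) ^ ρ) := by
        have : ∀ i : Fin K, b i - a i = 1 := by intro i; simp [hb]
        simp [this, Finset.sum_const, nsmul_eq_mul]


set_option maxHeartbeats 1000000 in
lemma nuShell_lower (θ ρ : ℝ) (hθ : θ ∈ Set.Ioo (0:ℝ) 1) (hρ : 0 < ρ) (hρθ : ρ ≤ 1 - θ)
    (n : ℕ) (F : Set ℝ)
    (hne : ∀ i ∈ Finset.Icc (0:ℤ)
        ⌊Real.exp (((n:ℝ) + 1) * (1 - θ) + 1) - Real.exp (((n:ℝ) + 1) * (1 - θ))⌋,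
      (F ∩ Set.Ico (Real.exp ((n:ℝ) + 1) + i * Real.exp (θ * ((n:ℝ) + 1)))
        (Real.exp ((n:ℝ) + 1) + i * Real.exp (θ * ((n:ℝ) + 1)) + Real.exp (θ * ((n:ℝ) + 1)))).Nonempty) :
    ENNReal.ofReal ((Real.exp 1 - 2) / (3 * Real.exp 1)) ≤ nuShell ρ (n + 1) F := by
  obtain ⟨hθ0, hθ1⟩ := hθ
  set r : ℝ := (n : ℝ) + 1 with hr
  have hr1 : 1 ≤ r := by
    rw [hr]; linarith [(Nat.cast_nonneg n : (0:ℝ) ≤ (n:ℝ))]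
  set h : ℝ := Real.exp (θ * r) with hh
  set R : ℝ := Real.exp r with hR
  set R' : ℝ := Real.exp (r * (1 - θ)) with hR'
  set D : ℝ := Real.exp (r * (1 - θ) + 1) - Real.exp (r * (1 - θ)) with hD
  have hh1 : 1 ≤ h := Real.one_le_exp (by nlinarith)
  have hh0 : 0 < h := lt_of_lt_of_le one_pos hh1
  have hR'1 : 1 ≤ R' := Real.one_le_exp (by nlinarith)
  have hR1 : 1 ≤ R := Real.one_le_exp (by linarith)
  have hR0 : 0 < R := lt_of_lt_of_le one_pos hR1
  have hR'h : R' * h = R := by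
    rw [hR', hh, hR, ← Real.exp_add]; congr 1; ring
  have hDval : D = R' * (Real.exp 1 - 1) := by
    rw [hD, hR', Real.exp_add]; ring
  have he1 : (2.7182818283 : ℝ) < Real.exp 1 := Real.exp_one_gt_d9
  have hD1 : 1 < D := by nlinarith
  set M : ℤ := ⌊D⌋ with hM
  have hM1 : 1 ≤ M := by
    rw [hM]; exact Int.le_floor.mpr (by push_cast; linarith)
  set Mt : ℕ := M.toNat with hMt
  have hMtM : (Mt : ℤ) = M := Int.toNat_of_nonneg (by linarith)
  have hMtD : (Mt : ℝ) ≤ D := by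
    have : ((Mt : ℤ) : ℝ) ≤ D := by rw [hMtM]; exact Int.floor_le D
    exact_mod_cast this
  have hMtD' : D - 1 < (Mt : ℝ) := by
    have : D - 1 < ((Mt : ℤ) : ℝ) := by rw [hMtM]; exact Int.sub_one_lt_floor D
    exact_mod_cast this
  -- choose points in each cell
  have hp : ∀ k : Fin Mt, (F ∩ Set.Ico (R + k * h) (R + k * h + h)).Nonempty := by
    intro k
    have hk : ((k : ℕ) : ℤ) ∈ Finset.Icc (0:ℤ) M := by
      refine Finset.mem_Icc.mpr ⟨by positivity, ?_⟩
      rw [← hMtM]; exact_mod_cast (k.2.le)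
    have := hne ((k : ℕ) : ℤ) hk
    simpa [hR, hh, Int.cast_natCast] using this
  choose p hp using hp
  have hpF : ∀ k, p k ∈ F := fun k => (hp k).1
  have hplo : ∀ k, R + k * h ≤ p k := fun k => (hp k).2.1
  have hphi : ∀ k, p k < R + k * h + h := fun k => (hp k).2.2
  have hcast1 : ((n + 1 : ℕ) : ℝ) = r := by rw [hr]; push_cast; ring
  have hDh : D * h = (Real.exp 1 - 1) * R := by rw [hDval, ← hR'h]; ring
  have hpshell : ∀ k, p k ∈ shell (n + 1) F := by
    intro k
    have hk0 : (0:ℝ) ≤ ((k:ℕ):ℝ) := Nat.cast_nonneg _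
    refine ⟨hpF k, Or.inr ⟨?_, ?_⟩⟩
    · rw [hcast1, ← hR]
      nlinarith [hplo k, hh0]
    · rw [hcast1]
      have hexp : Real.exp (r + 1) = R * Real.exp 1 := by rw [hR, ← Real.exp_add]
      rw [hexp]
      have hk1 : ((k:ℕ) : ℝ) + 1 ≤ (Mt : ℝ) := by exact_mod_cast k.2
      nlinarith [hphi k, hh0, hMtD, hk1, hDh,
        mul_le_mul_of_nonneg_right (hk1.trans hMtD) hh0.le]
  -- lower bound the infimum
  refine le_iInf fun m => le_iInf fun a => le_iInf fun b => le_iInf fun hlen => le_iInf fun hcov => ?_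
  have hex : ∀ k : Fin Mt, ∃ j : Fin m, p k ∈ Set.Icc (a j) (b j) := by
    intro k
    exact Set.mem_iUnion.mp (hcov (hpshell k))
  choose f hf using hex
  classical
  set T : Fin m → Finset (Fin Mt) := fun j => Finset.univ.filter (fun k => f k = j) with hT
  have hMtsum : (Mt : ℝ) = ∑ j : Fin m, ((T j).card : ℝ) := by
    have := Finset.card_eq_sum_card_fiberwise (f := f) (s := Finset.univ) (t := Finset.univ)
      (fun x _ => Finset.mem_univ _)
    rw [Finset.card_univ, Fintype.card_fin] at this
    exact_mod_cast congrArg (Nat.cast : ℕ → ℝ) this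
  -- per-interval counting bound
  have hcount : ∀ j : Fin m, ((T j).card : ℝ) ≤ (b j - a j) / h + 2 := by
    intro j
    have hmap : ∀ k ∈ T j, ((k : ℕ) : ℤ) ∈
        Finset.Icc (⌊(a j - R - h)/h⌋ + 1) ⌊(b j - R)/h⌋ := by
      intro k hk
      have hfk : f k = j := by simpa [hT] using hk
      have h1 : a j ≤ p k := by have := hf k; rw [hfk] at this; exact this.1
      have h2 : p k ≤ b j := by have := hf k; rw [hfk] at this; exact this.2
      refine Finset.mem_Icc.mpr ⟨?_, ?_⟩
      · rw [Int.add_one_le_iff, Int.floor_lt]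
        push_cast
        rw [div_lt_iff₀ hh0]
        linarith [hphi k]
      · rw [Int.le_floor]
        push_cast
        rw [le_div_iff₀ hh0]
        linarith [hplo k]
    have hinj : Set.InjOn (fun k : Fin Mt => ((k : ℕ) : ℤ)) (T j : Set (Fin Mt)) := by
      intro x _ y _ hxy
      have hxy' : ((x : ℕ) : ℤ) = ((y : ℕ) : ℤ) := hxy
      exact Fin.ext (by exact_mod_cast hxy')
    have hcard := Finset.card_le_card_of_injOn _ hmap hinj
    rw [Int.card_Icc] at hcard
    have hlo := Int.sub_one_lt_floor ((a j - R - h)/h)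
    have hhi := Int.floor_le ((b j - R)/h)
    have hcast : ((⌊(b j - R)/h⌋ + 1 - (⌊(a j - R - h)/h⌋ + 1)).toNat : ℝ)
        ≤ (b j - a j)/h + 2 := by
      rcases le_or_gt (⌊(b j - R)/h⌋ + 1 - (⌊(a j - R - h)/h⌋ + 1)) 0 with hle | hgt
      · rw [Int.toNat_of_nonpos hle]
        have : (0:ℝ) ≤ (b j - a j)/h := by
          have := hlen j
          positivity
        norm_num; linarith
      · set z : ℤ := ⌊(b j - R)/h⌋ + 1 - (⌊(a j - R - h)/h⌋ + 1) with hzdef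
        have hz : ((z.toNat : ℕ) : ℝ) = (z : ℝ) := by
          exact_mod_cast Int.toNat_of_nonneg hgt.le
        rw [hz, hzdef]
        push_cast
        have hdiv : (b j - R)/h - (a j - R - h)/h = (b j - a j)/h + 1 := by
          field_simp; ring
        linarith [hlo, hhi]
    calc ((T j).card : ℝ) ≤ _ := by exact_mod_cast hcard
      _ ≤ _ := hcast
  -- unified bound
  have hkey : ∀ j : Fin m, ((T j).card : ℝ)
      ≤ 3 * Real.exp 1 * R' * ((b j - a j) / R) ^ ρ := by
    intro j
    set L : ℝ := b j - a j with hL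
    have hL1 : 1 ≤ L := hlen j
    have hL0 : 0 < L := lt_of_lt_of_le one_pos hL1
    set t : ℝ := L / R with ht
    have ht0 : 0 < t := by positivity
    rcases le_or_gt R L with hcase | hcase
    · -- big interval: card ≤ Mt ≤ D ≤ 3e R' and t^ρ ≥ 1
      have h1 : ((T j).card : ℝ) ≤ (Mt : ℝ) := by
        exact_mod_cast Finset.card_le_card (Finset.subset_univ (T j)) |>.trans_eq
          (by rw [Finset.card_univ, Fintype.card_fin])
      have ht1 : 1 ≤ t := by rw [ht]; rw [le_div_iff₀ hR0]; linarith
      have htρ : 1 ≤ t ^ ρ := Real.one_le_rpow ht1 hρ.le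
      have : (Mt : ℝ) ≤ 3 * Real.exp 1 * R' := by
        calc (Mt:ℝ) ≤ D := hMtD
          _ = R' * (Real.exp 1 - 1) := hDval
          _ ≤ 3 * Real.exp 1 * R' := by nlinarith
      nlinarith
    · have hcnt := hcount j
      rcases le_or_gt h L with hcase2 | hcase2
      · -- medium: card ≤ 3L/h ≤ 3 R' t^ρ
        have h1 : L / h + 2 ≤ 3 * (L / h) := by
          have : 1 ≤ L / h := (one_le_div hh0).mpr hcase2
          linarith
        have h2 : L / h ≤ R' * t ^ ρ := by
          have htle1 : t ≤ 1 := by rw [ht, div_le_one hR0]; linarith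
          have hmono : t ^ (1:ℝ) ≤ t ^ ρ :=
            Real.rpow_le_rpow_of_exponent_ge ht0 htle1 (by linarith)
          rw [Real.rpow_one] at hmono
          have : L / R ≤ t ^ ρ := by rw [← ht]; exact hmono
          calc L / h = (L / R) * R' := by
                field_simp
                rw [← hR'h]; ring
            _ ≤ t ^ ρ * R' := by nlinarith [this, hR'1]
            _ = R' * t ^ ρ := by ring
        have he0 : 1 ≤ Real.exp 1 := Real.one_le_exp zero_le_one
        have htρ0 : 0 ≤ t ^ ρ := Real.rpow_nonneg ht0.le ρ
        nlinarith
      · -- small: card ≤ 3 ≤ 3 R' t^ρ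
        have h1 : ((T j).card : ℝ) ≤ 3 := by
          have : L / h < 1 := (div_lt_one hh0).mpr hcase2
          linarith
        have h2 : 1 ≤ R' * t ^ ρ := by
          have hge : (1 / R : ℝ) ≤ t := by
            rw [ht]; gcongr
          have h3 : (1/R) ^ ρ ≤ t ^ ρ := Real.rpow_le_rpow (by positivity) hge hρ.le
          have h4 : (1/R : ℝ) ^ ρ = Real.exp (-(r * ρ)) := by
            rw [one_div, ← Real.exp_neg, ← Real.exp_mul]
            congr 1; ring
          have h5 : Real.exp (-(r * (1-θ))) ≤ Real.exp (-(r * ρ)) := by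
            apply Real.exp_le_exp.mpr
            nlinarith
          have h6 : R' * Real.exp (-(r * (1-θ))) = 1 := by
            rw [hR', ← Real.exp_add]; norm_num
          nlinarith [Real.exp_pos (-(r * (1-θ))), hR'1, h3, h5]
        have he0 : 1 ≤ Real.exp 1 := Real.one_le_exp zero_le_one
        nlinarith
  -- combine
  have hsum2 : (Mt : ℝ) ≤ 3 * Real.exp 1 * R' * ∑ j : Fin m, ((b j - a j) / R) ^ ρ := by
    rw [hMtsum, Finset.mul_sum]
    exact Finset.sum_le_sum fun j _ => hkey j
  have hMtlow : (Real.exp 1 - 2) * R' ≤ (Mt : ℝ) := by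
    have : (Real.exp 1 - 2) * R' ≤ D - 1 := by nlinarith
    linarith
  have hSlow : (Real.exp 1 - 2) / (3 * Real.exp 1) ≤ ∑ j : Fin m, ((b j - a j) / R) ^ ρ := by
    have hpos : 0 < 3 * Real.exp 1 * R' := by positivity
    rw [div_le_iff₀ (by positivity)]
    nlinarith [hsum2, hMtlow, hR'1]
  -- conclude in ENNReal
  have hgoal : ∑ i, ENNReal.ofReal (((b i - a i) / Real.exp ((n+1 : ℕ) : ℝ)) ^ ρ)
      = ∑ i, ENNReal.ofReal (((b i - a i) / R) ^ ρ) := by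
    congr 1
    ext i
    congr 2
    rw [hR, hr]; push_cast; ring_nf
  rw [hgoal]
  calc ENNReal.ofReal ((Real.exp 1 - 2) / (3 * Real.exp 1))
      ≤ ENNReal.ofReal (∑ j : Fin m, ((b j - a j) / R) ^ ρ) :=
        ENNReal.ofReal_le_ofReal hSlow
    _ = ∑ j : Fin m, ENNReal.ofReal (((b j - a j) / R) ^ ρ) :=
        ENNReal.ofReal_sum_of_nonneg fun j _ => Real.rpow_nonneg (by
          have := hlen j
          positivity) ρ
    _ = _ := rfl

/-- Let `E` be a random subset of `ℝ` and `θ ∈ (0,1)`.  If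
`∑_{n=1}^∞ ∑_{x ∈ Π_n(θ)} P(E ∩ [x, x + e^(θn)) = ∅) < ∞`, where `Π_n(θ)` consists of the
points `x = e^n + i e^(θn)` with `i ∈ ℤ`, `0 ≤ i ≤ e^(n(1-θ)+1) - e^(n(1-θ))`, then almost
surely `Dim_H(E) ≥ 1 - θ`. -/
theorem macroDimH_lower_bound_of_summable
    {Ω : Type*} [MeasurableSpace Ω] (μ : Measure Ω) [IsProbabilityMeasure μ]
    (E : Ω → Set ℝ) (θ : ℝ) (hθ : θ ∈ Set.Ioo (0 : ℝ) 1)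
    (hmeas : ∀ (n : ℕ) (i : ℤ), MeasurableSet
      {ω | E ω ∩ Set.Ico (Real.exp n + i * Real.exp (θ * n))
        (Real.exp n + i * Real.exp (θ * n) + Real.exp (θ * n)) = ∅})
    (hsum : ∑' n : ℕ,
      ∑ i ∈ Finset.Icc (0 : ℤ)
          ⌊Real.exp ((n + 1) * (1 - θ) + 1) - Real.exp ((n + 1) * (1 - θ))⌋,
        μ {ω | E ω ∩ Set.Ico (Real.exp (n + 1) + i * Real.exp (θ * (n + 1)))
            (Real.exp (n + 1) + i * Real.exp (θ * (n + 1)) + Real.exp (θ * (n + 1))) = ∅}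
      < ⊤) :
    ∀ᵐ ω ∂μ, 1 - θ ≤ macroDimH (E ω) := by
  
  classical
  set A : ℕ → Set Ω := fun n => ⋃ i ∈ Finset.Icc (0 : ℤ)
      ⌊Real.exp ((n + 1) * (1 - θ) + 1) - Real.exp ((n + 1) * (1 - θ))⌋,
    {ω | E ω ∩ Set.Ico (Real.exp (n + 1) + i * Real.exp (θ * (n + 1)))
      (Real.exp (n + 1) + i * Real.exp (θ * (n + 1)) + Real.exp (θ * (n + 1))) = ∅} with hA
  have hsum' : ∑' n : ℕ, μ (A n) ≠ ⊤ :=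
    (lt_of_le_of_lt (ENNReal.tsum_le_tsum fun n => measure_biUnion_finset_le _ _) hsum).ne
  filter_upwards [MeasureTheory.ae_eventually_notMem hsum'] with ω hω
  obtain ⟨N, hN⟩ := Filter.eventually_atTop.mp hω
  rw [macroDimH]
  refine le_csInf ⟨2, by norm_num, tsum_nuShell_two_lt_top (E ω)⟩ ?_
  rintro ρ ⟨hρ0, hρsum⟩
  by_contra hlt
  push_neg at hlt
  have hlow : ∀ n, N ≤ n →
      ENNReal.ofReal ((Real.exp 1 - 2) / (3 * Real.exp 1)) ≤ nuShell ρ (n + 1) (E ω) := by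
    intro n hn
    refine nuShell_lower θ ρ hθ hρ0 hlt.le n (E ω) ?_
    intro i hi
    have h1 := hN n hn
    rw [hA] at h1
    simp only [Set.mem_iUnion] at h1
    rw [Set.nonempty_iff_ne_empty]
    intro hemp
    exact h1 ⟨i, hi, hemp⟩
  set c := ENNReal.ofReal ((Real.exp 1 - 2) / (3 * Real.exp 1)) with hc
  have he1 : (2.7182818283 : ℝ) < Real.exp 1 := Real.exp_one_gt_d9
  have hc0 : c ≠ 0 := by
    rw [hc]
    exact (ENNReal.ofReal_pos.mpr (div_pos (by nlinarith) (by nlinarith))).ne'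
  have hctop : c ≠ ⊤ := by rw [hc]; exact ENNReal.ofReal_ne_top
  have hKle : ∀ K : ℕ, (K : ENNReal) * c ≤ ∑' n : ℕ, nuShell ρ (n + 1) (E ω) := by
    intro K
    calc (K : ENNReal) * c = ∑ _n ∈ Finset.Ico N (N + K), c := by
          rw [Finset.sum_const, Nat.card_Ico, nsmul_eq_mul]
          congr 1
          simp
      _ ≤ ∑ n ∈ Finset.Ico N (N + K), nuShell ρ (n + 1) (E ω) :=
          Finset.sum_le_sum fun n hn => hlow n (Finset.mem_Ico.mp hn).1
      _ ≤ ∑' n : ℕ, nuShell ρ (n + 1) (E ω) := ENNReal.sum_le_tsum _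
  have htop : ∑' n : ℕ, nuShell ρ (n + 1) (E ω) ≠ ⊤ := hρsum.ne
  obtain ⟨K, hKgt⟩ := ENNReal.exists_nat_gt
    (ENNReal.div_lt_top htop hc0).ne
  have h2 : ∑' n : ℕ, nuShell ρ (n + 1) (E ω) < (K : ENNReal) * c :=
    (ENNReal.div_lt_iff (Or.inl hc0) (Or.inl hctop)).mp hKgt
  exact absurd (hKle K) h2.not_ge
end

section
/- Let E be a random subset of (e, ∞) on a probability space (such that all the events below are measurable). Suppose there exist α ∈ (0,1) and a constant C > 0 such that for all sufficiently large integers m, P( E ∩ [m, m+1) ≠ ∅ ) ≤ C m^{−α}. Then for every ρ > 1 − α one has E[ Σ_{n=0}^∞ ν_ρ^n(E) ] < ∞, and consequently the macroscopic Hausdorff dimension satisfies Dim_H(E) ≤ 1 − α almost surely. -/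
open MeasureTheory Real

open Classical in
lemma nuShell_le (ρ : ℝ) (n : ℕ) (S : Set ℝ) (hS : S ⊆ Set.Ioi (0:ℝ)) :
    nuShell ρ n S ≤ ∑ m ∈ Finset.Icc ⌊Real.exp n⌋₊ ⌊Real.exp (n+1)⌋₊,
      (if (S ∩ Set.Ico (m:ℝ) (m+1)).Nonempty
        then ENNReal.ofReal ((1 / Real.exp n) ^ ρ) else 0) := by
  set T := (Finset.Icc ⌊Real.exp n⌋₊ ⌊Real.exp (n+1)⌋₊).filter
      (fun m : ℕ => (S ∩ Set.Ico (m:ℝ) ((m:ℝ)+1)).Nonempty) with hT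
  have hsum : (∑ m ∈ Finset.Icc ⌊Real.exp n⌋₊ ⌊Real.exp (n+1)⌋₊,
      (if (S ∩ Set.Ico (m:ℝ) (m+1)).Nonempty
        then ENNReal.ofReal ((1 / Real.exp n) ^ ρ) else 0))
      = T.card • ENNReal.ofReal ((1 / Real.exp n) ^ ρ) := by
    rw [hT, ← Finset.sum_filter, Finset.sum_const]
  rw [hsum]
  set k := T.card with hk
  set e := T.orderIsoOfFin rfl with he
  set a : Fin k → ℝ := fun i => ((e i : ℕ) : ℝ) with ha
  set b : Fin k → ℝ := fun i => a i + 1 with hb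
  have hlen : ∀ i, 1 ≤ b i - a i := fun i => by simp [hb]
  have hcov : shell n S ⊆ ⋃ i, Set.Icc (a i) (b i) := by
    intro x hx
    obtain ⟨hxS, hxI⟩ := hx
    have hxpos : 0 < x := hS hxS
    rcases hxI with h | h
    · exfalso; have := h.2; have := exp_pos ((n:ℝ)); linarith
    · set m := ⌊x⌋₊ with hm
      have hmT : m ∈ T := by
        rw [hT, Finset.mem_filter, Finset.mem_Icc]
        refine ⟨⟨Nat.floor_mono h.1, Nat.floor_mono h.2.le⟩, ⟨x, hxS, ?_, ?_⟩⟩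
        · exact Nat.floor_le hxpos.le
        · exact_mod_cast Nat.lt_floor_add_one x
      refine Set.mem_iUnion.mpr ⟨e.symm ⟨m, hmT⟩, ?_⟩
      have hval : a (e.symm ⟨m, hmT⟩) = (m:ℝ) := by simp [ha]
      constructor
      · rw [hval]; exact Nat.floor_le hxpos.le
      · show x ≤ a _ + 1
        rw [hval]
        exact_mod_cast (Nat.lt_floor_add_one x).le
  calc nuShell ρ n S ≤ ∑ i : Fin k, ENNReal.ofReal (((b i - a i) / Real.exp n) ^ ρ) := by
        refine iInf_le_of_le k (iInf_le_of_le a (iInf_le_of_le b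
          (iInf_le_of_le hlen (iInf_le_of_le hcov le_rfl))))
    _ = k • ENNReal.ofReal ((1 / Real.exp n) ^ ρ) := by
        have : ∀ i : Fin k, b i - a i = 1 := fun i => by simp [hb]
        simp [this, Finset.card_univ]

lemma hit_mono_bound {x : ℝ} (hx : 1 ≤ x) : x / 2 ≤ (⌊x⌋₊ : ℕ) := by
  rcases le_or_gt x 2 with h2 | h2
  · have h1 : (1:ℕ) ≤ ⌊x⌋₊ := Nat.le_floor (by exact_mod_cast hx)
    have : (1:ℝ) ≤ (⌊x⌋₊:ℝ) := by exact_mod_cast h1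
    linarith
  · have := Nat.sub_one_lt_floor x
    linarith

/-- Let `E` be a random subset of `(e, ∞)`.  If there are `α ∈ (0,1)` and `C > 0` with
`P(E ∩ [m, m+1) ≠ ∅) ≤ C m^(-α)` for all sufficiently large integers `m`, then for every
`ρ > 1 - α` one has `𝔼[∑_{n=0}^∞ ν_ρ^n(E)] < ∞`, and consequently `Dim_H(E) ≤ 1 - α`
almost surely. -/
theorem macroDimH_upper_bound_of_hitting_prob
    {Ω : Type*} [MeasurableSpace Ω] (μ : Measure Ω) [IsProbabilityMeasure μ]
    (E : Ω → Set ℝ) (hE : ∀ ω, E ω ⊆ Set.Ioi (Real.exp 1))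
    (hmeas : ∀ m : ℕ, MeasurableSet {ω | (E ω ∩ Set.Ico (m : ℝ) (m + 1)).Nonempty})
    (α C : ℝ) (hα : α ∈ Set.Ioo (0 : ℝ) 1) (hC : 0 < C)
    (hbound : ∃ m₀ : ℕ, ∀ m : ℕ, m₀ ≤ m →
      (μ {ω | (E ω ∩ Set.Ico (m : ℝ) (m + 1)).Nonempty}).toReal ≤ C * (m : ℝ) ^ (-α)) :
    (∀ ρ : ℝ, 1 - α < ρ → ∫⁻ ω, ∑' n : ℕ, nuShell ρ n (E ω) ∂μ < ⊤) ∧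
    ∀ᵐ ω ∂μ, macroDimH (E ω) ≤ 1 - α := by
  classical
  obtain ⟨m₀, hm₀⟩ := hbound
  obtain ⟨hα0, hα1⟩ := hα
  set M : ℕ := max m₀ 1 with hMdef
  set C' : ℝ := C + (M : ℝ) ^ α with hC'def
  have hMpos : (0:ℝ) < M := by
    have : (1:ℕ) ≤ M := le_max_right _ _
    exact_mod_cast Nat.lt_of_lt_of_le Nat.zero_lt_one this
  have hC'pos : 0 < C' := by positivity
  -- uniform hitting probability bound
  have hprob : ∀ m : ℕ, 1 ≤ m →
      μ {ω | (E ω ∩ Set.Ico (m : ℝ) (m + 1)).Nonempty} ≤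
        ENNReal.ofReal (C' * (m:ℝ) ^ (-α)) := by
    intro m hm
    have hmpos : (0:ℝ) < m := by exact_mod_cast hm
    have hrpos : (0:ℝ) < (m:ℝ) ^ (-α) := Real.rpow_pos_of_pos hmpos _
    have hrMnn : (0:ℝ) ≤ (M:ℝ) ^ α := (Real.rpow_pos_of_pos hMpos _).le
    rcases le_or_gt m₀ m with h | h
    · have hb := hm₀ m h
      have hne : μ {ω | (E ω ∩ Set.Ico (m : ℝ) (m + 1)).Nonempty} ≠ ⊤ := measure_ne_top μ _
      calc μ {ω | (E ω ∩ Set.Ico (m : ℝ) (m + 1)).Nonempty}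
          = ENNReal.ofReal (μ {ω | (E ω ∩ Set.Ico (m : ℝ) (m + 1)).Nonempty}).toReal :=
            (ENNReal.ofReal_toReal hne).symm
        _ ≤ ENNReal.ofReal (C * (m:ℝ)^(-α)) := ENNReal.ofReal_le_ofReal hb
        _ ≤ ENNReal.ofReal (C' * (m:ℝ)^(-α)) := by
            apply ENNReal.ofReal_le_ofReal
            have : C ≤ C' := le_add_of_nonneg_right hrMnn
            exact mul_le_mul_of_nonneg_right this hrpos.le
    · have hmM : (m:ℝ) ≤ (M:ℝ) := by
        have : m ≤ M := le_trans h.le (le_max_left _ _)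
        exact_mod_cast this
      have h1 : (1:ℝ) ≤ (M:ℝ)^α * (m:ℝ)^(-α) := by
        have hle : (m:ℝ)^α ≤ (M:ℝ)^α := Real.rpow_le_rpow hmpos.le hmM hα0.le
        calc (1:ℝ) = (m:ℝ)^α * (m:ℝ)^(-α) := by
              rw [← Real.rpow_add hmpos, add_neg_cancel, Real.rpow_zero]
          _ ≤ (M:ℝ)^α * (m:ℝ)^(-α) := mul_le_mul_of_nonneg_right hle hrpos.le
      have h2 : (1:ℝ) ≤ C' * (m:ℝ)^(-α) := by nlinarith
      calc μ {ω | (E ω ∩ Set.Ico (m : ℝ) (m + 1)).Nonempty} ≤ 1 := prob_le_one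
        _ = ENNReal.ofReal 1 := ENNReal.ofReal_one.symm
        _ ≤ ENNReal.ofReal (C' * (m:ℝ)^(-α)) := ENNReal.ofReal_le_ofReal h2
  -- the dominating random variables
  set g : ℝ → ℕ → Ω → ENNReal := fun ρ n ω =>
    ∑ m ∈ Finset.Icc ⌊Real.exp n⌋₊ ⌊Real.exp (n+1)⌋₊,
      (if (E ω ∩ Set.Ico (m:ℝ) ((m:ℝ)+1)).Nonempty
        then ENNReal.ofReal ((1 / Real.exp n) ^ ρ) else 0) with hgdef
  have hg : ∀ ρ n, Measurable (g ρ n) := by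
    intro ρ n
    apply Finset.measurable_sum
    intro m _
    exact Measurable.ite (hmeas m) measurable_const measurable_const
  have hnu_le : ∀ ρ (ω : Ω) (n : ℕ), nuShell ρ n (E ω) ≤ g ρ n ω := by
    intro ρ ω n
    exact nuShell_le ρ n (E ω) (fun x hx => lt_trans (exp_pos 1) (hE ω hx))
  -- integral of g
  have hgint : ∀ ρ n, ∫⁻ ω, g ρ n ω ∂μ =
      ∑ m ∈ Finset.Icc ⌊Real.exp n⌋₊ ⌊Real.exp (n+1)⌋₊,
        μ {ω | (E ω ∩ Set.Ico (m:ℝ) ((m:ℝ)+1)).Nonempty} *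
          ENNReal.ofReal ((1 / Real.exp n) ^ ρ) := by
    intro ρ n
    rw [hgdef]
    rw [lintegral_finset_sum _
      (fun m _ => Measurable.ite (hmeas m) measurable_const measurable_const)]
    refine Finset.sum_congr rfl (fun m _ => ?_)
    have heq : (fun ω => if (E ω ∩ Set.Ico (m:ℝ) ((m:ℝ)+1)).Nonempty
        then ENNReal.ofReal ((1 / Real.exp n) ^ ρ) else 0)
        = Set.indicator {ω | (E ω ∩ Set.Ico (m:ℝ) ((m:ℝ)+1)).Nonempty}
            (fun _ => ENNReal.ofReal ((1 / Real.exp n) ^ ρ)) := by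
      ext ω; simp [Set.indicator_apply]
    rw [heq, lintegral_indicator_const (hmeas m), mul_comm]
  -- per-shell estimate
  have hterm : ∀ (ρ : ℝ) (n : ℕ), ∫⁻ ω, g ρ n ω ∂μ ≤
      ENNReal.ofReal ((4 * C' * Real.exp 1) * Real.exp ((1 - α - ρ) * n)) := by
    intro ρ n
    have hexp1 : (1:ℝ) ≤ Real.exp n := Real.one_le_exp (by positivity)
    have hfloor1 : (1:ℕ) ≤ ⌊Real.exp n⌋₊ := Nat.le_floor (by exact_mod_cast hexp1)
    -- bound each m^{-α}
    have hmbd : ∀ m ∈ Finset.Icc ⌊Real.exp n⌋₊ ⌊Real.exp (n+1)⌋₊,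
        (m:ℝ) ^ (-α) ≤ 2 * Real.exp (-(n*α)) := by
      intro m hm
      rw [Finset.mem_Icc] at hm
      have hm1 : Real.exp n / 2 ≤ (m:ℝ) := by
        refine le_trans (hit_mono_bound hexp1) ?_
        exact_mod_cast hm.1
      have hm0 : (0:ℝ) < m := lt_of_lt_of_le (by positivity) hm1
      have step1 : (m:ℝ) ^ (-α) ≤ (Real.exp n / 2) ^ (-α) :=
        Real.rpow_le_rpow_of_nonpos (by positivity) hm1 (neg_nonpos.mpr hα0.le)
      have step2 : (Real.exp n / 2) ^ (-α) = Real.exp (-(n*α)) * (2:ℝ) ^ α := by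
        rw [Real.div_rpow (Real.exp_nonneg _) (by norm_num), div_eq_mul_inv,
          Real.rpow_neg (by norm_num : (0:ℝ) ≤ 2), inv_inv, ← Real.exp_mul, mul_neg]
      have step3 : (2:ℝ) ^ α ≤ 2 := by
        calc (2:ℝ) ^ α ≤ (2:ℝ) ^ (1:ℝ) :=
              Real.rpow_le_rpow_of_exponent_le one_le_two hα1.le
          _ = 2 := Real.rpow_one 2
      calc (m:ℝ) ^ (-α) ≤ Real.exp (-(n*α)) * (2:ℝ) ^ α := by rw [← step2]; exact step1
        _ ≤ Real.exp (-(n*α)) * 2 := mul_le_mul_of_nonneg_left step3 (Real.exp_nonneg _)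
        _ = 2 * Real.exp (-(n*α)) := mul_comm _ _
    -- constant term
    have hcval : ((1:ℝ) / Real.exp n) ^ ρ = Real.exp (-(n*ρ)) := by
      rw [one_div, ← Real.exp_neg, ← Real.exp_mul]
      ring_nf
    -- cardinality bound
    have hcard : (((Finset.Icc ⌊Real.exp n⌋₊ ⌊Real.exp (n+1)⌋₊).card : ℕ) : ℝ) ≤
        2 * Real.exp (n+1) := by
      rw [Nat.card_Icc]
      have h1 : ⌊Real.exp (n+1)⌋₊ + 1 - ⌊Real.exp n⌋₊ ≤ ⌊Real.exp (n+1)⌋₊ + 1 :=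
        Nat.sub_le _ _
      have h2 : ((⌊Real.exp (n+1)⌋₊ : ℕ) : ℝ) ≤ Real.exp (n+1) :=
        Nat.floor_le (Real.exp_nonneg _)
      have h3 : (1:ℝ) ≤ Real.exp ((n:ℝ)+1) := Real.one_le_exp (by positivity)
      calc ((⌊Real.exp (n+1)⌋₊ + 1 - ⌊Real.exp n⌋₊ : ℕ) : ℝ)
          ≤ ((⌊Real.exp (n+1)⌋₊ + 1 : ℕ) : ℝ) := by exact_mod_cast h1
        _ ≤ Real.exp (n+1) + 1 := by push_cast; linarith
        _ ≤ 2 * Real.exp (n+1) := by linarith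
    -- combine
    rw [hgint ρ n]
    have hB : ∀ m ∈ Finset.Icc ⌊Real.exp n⌋₊ ⌊Real.exp (n+1)⌋₊,
        μ {ω | (E ω ∩ Set.Ico (m:ℝ) ((m:ℝ)+1)).Nonempty} *
          ENNReal.ofReal ((1 / Real.exp n) ^ ρ) ≤
        ENNReal.ofReal ((C' * (2 * Real.exp (-(n*α)))) * Real.exp (-(n*ρ))) := by
      intro m hm
      have hm1 : 1 ≤ m := le_trans hfloor1 (Finset.mem_Icc.mp hm).1
      calc μ {ω | (E ω ∩ Set.Ico (m:ℝ) ((m:ℝ)+1)).Nonempty} *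
            ENNReal.ofReal ((1 / Real.exp n) ^ ρ)
          ≤ ENNReal.ofReal (C' * (m:ℝ) ^ (-α)) * ENNReal.ofReal (Real.exp (-(n*ρ))) := by
            rw [hcval]
            exact mul_le_mul_left (hprob m hm1) _
        _ = ENNReal.ofReal ((C' * (m:ℝ) ^ (-α)) * Real.exp (-(n*ρ))) :=
            (ENNReal.ofReal_mul (by positivity)).symm
        _ ≤ ENNReal.ofReal ((C' * (2 * Real.exp (-(n*α)))) * Real.exp (-(n*ρ))) := by
            apply ENNReal.ofReal_le_ofReal
            exact mul_le_mul_of_nonneg_right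
              (mul_le_mul_of_nonneg_left (hmbd m hm) hC'pos.le) (Real.exp_pos _).le
    calc (∑ m ∈ Finset.Icc ⌊Real.exp n⌋₊ ⌊Real.exp (n+1)⌋₊,
          μ {ω | (E ω ∩ Set.Ico (m:ℝ) ((m:ℝ)+1)).Nonempty} *
            ENNReal.ofReal ((1 / Real.exp n) ^ ρ))
        ≤ ∑ _m ∈ Finset.Icc ⌊Real.exp n⌋₊ ⌊Real.exp (n+1)⌋₊,
            ENNReal.ofReal ((C' * (2 * Real.exp (-(n*α)))) * Real.exp (-(n*ρ))) :=
          Finset.sum_le_sum hB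
      _ = ((Finset.Icc ⌊Real.exp n⌋₊ ⌊Real.exp (n+1)⌋₊).card : ENNReal) *
            ENNReal.ofReal ((C' * (2 * Real.exp (-(n*α)))) * Real.exp (-(n*ρ))) := by
          rw [Finset.sum_const, nsmul_eq_mul]
      _ = ENNReal.ofReal (((Finset.Icc ⌊Real.exp n⌋₊ ⌊Real.exp (n+1)⌋₊).card : ℝ) *
            ((C' * (2 * Real.exp (-(n*α)))) * Real.exp (-(n*ρ)))) := by
          rw [← ENNReal.ofReal_natCast ((Finset.Icc ⌊Real.exp n⌋₊ ⌊Real.exp (n+1)⌋₊).card),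
            ← ENNReal.ofReal_mul (Nat.cast_nonneg _)]
      _ ≤ ENNReal.ofReal ((2 * Real.exp (n+1)) *
            ((C' * (2 * Real.exp (-(n*α)))) * Real.exp (-(n*ρ)))) := by
          apply ENNReal.ofReal_le_ofReal
          apply mul_le_mul_of_nonneg_right hcard (by positivity)
      _ = ENNReal.ofReal ((4 * C' * Real.exp 1) * Real.exp ((1 - α - ρ) * n)) := by
          congr 1
          have hprod : Real.exp ((n:ℝ)+1) * (Real.exp (-(n*α)) * Real.exp (-(n*ρ)))
              = Real.exp 1 * Real.exp ((1 - α - ρ) * n) := by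
            rw [← Real.exp_add, ← Real.exp_add, ← Real.exp_add]
            congr 1
            ring
          linear_combination (4*C') * hprod
  -- summability
  have hsum : ∀ ρ : ℝ, 1 - α < ρ →
      (∑' n : ℕ, ENNReal.ofReal ((4 * C' * Real.exp 1) * Real.exp ((1 - α - ρ) * n))) < ⊤ := by
    intro ρ hρ
    have hr1 : Real.exp (1 - α - ρ) < 1 := Real.exp_lt_one_iff.mpr (by linarith)
    have hrw : ∀ n : ℕ, ENNReal.ofReal ((4 * C' * Real.exp 1) * Real.exp ((1 - α - ρ) * n))
        = ENNReal.ofReal (4 * C' * Real.exp 1) * (ENNReal.ofReal (Real.exp (1 - α - ρ)))^n := by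
      intro n
      rw [mul_comm (1 - α - ρ) (n:ℝ), Real.exp_nat_mul,
        ENNReal.ofReal_mul (by positivity), ENNReal.ofReal_pow (Real.exp_nonneg _)]
    simp_rw [hrw]
    rw [ENNReal.tsum_mul_left, ENNReal.tsum_geometric]
    apply ENNReal.mul_lt_top ENNReal.ofReal_lt_top
    rw [ENNReal.inv_lt_top]
    rw [tsub_pos_iff_lt]
    exact ENNReal.ofReal_lt_one.mpr hr1
  -- finiteness of the integral of the dominating series
  have key : ∀ ρ : ℝ, 1 - α < ρ → ∫⁻ ω, ∑' n : ℕ, g ρ n ω ∂μ < ⊤ := by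
    intro ρ hρ
    rw [lintegral_tsum (fun n => (hg ρ n).aemeasurable)]
    exact lt_of_le_of_lt (ENNReal.tsum_le_tsum (fun n => hterm ρ n)) (hsum ρ hρ)
  constructor
  · intro ρ hρ
    refine lt_of_le_of_lt (lintegral_mono fun ω => ?_) (key ρ hρ)
    exact ENNReal.tsum_le_tsum (hnu_le ρ ω)
  · have hae : ∀ k : ℕ, ∀ᵐ ω ∂μ, macroDimH (E ω) ≤ 1 - α + 1/((k:ℝ)+1) := by
      intro k
      set ρ := 1 - α + 1/((k:ℝ)+1) with hρdef
      have hρ : 1 - α < ρ := by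
        rw [hρdef]
        have : (0:ℝ) < 1/((k:ℝ)+1) := by positivity
        linarith
      have hρ0 : 0 < ρ := by
        rw [hρdef]
        have : (0:ℝ) < 1/((k:ℝ)+1) := by positivity
        linarith
      have h1 := ae_lt_top (Measurable.ennreal_tsum (hg ρ)) (key ρ hρ).ne
      filter_upwards [h1] with ω hω
      have h2 : ∑' n : ℕ, nuShell ρ n (E ω) < ⊤ :=
        lt_of_le_of_lt (ENNReal.tsum_le_tsum (hnu_le ρ ω)) hω
      have h3 : ∑' n : ℕ, nuShell ρ (n+1) (E ω) < ⊤ := by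
        refine lt_of_le_of_lt ?_ h2
        exact ENNReal.tsum_comp_le_tsum_of_injective (add_left_injective 1)
          (fun n => nuShell ρ n (E ω))
      exact csInf_le ⟨0, fun x hx => hx.1.le⟩ ⟨hρ0, h3⟩
    have hall := ae_all_iff.mpr hae
    filter_upwards [hall] with ω hω
    refine le_of_forall_pos_le_add (fun ε hε => ?_)
    obtain ⟨k, hk⟩ := exists_nat_one_div_lt hε
    exact (hω k).trans (by linarith)
end
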